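/- (Theorem 1, sufficiency) Let {f̂(n)}_{n≥0} ∈ GBV and {f̂(n) + f̂(−n)}_{n≥1} ∈ GBV. If Σ_{n=1}^{∞} |f̂(n) + f̂(−n)| < ∞ and lim_{n→∞} n·f̂(n) = 0, then the symmetric partial sums Σ_{k=−n}^{n} f̂(k)e^{ikx} converge at every real x and the sum function f is continuous, i.e. f ∈ C_{2π}. -/

import Mathlib

open Filter Complex Real

noncomputable section

/-- `K(θ) = {z ∈ ℂ : |arg z| ≤ θ}`. -/
def Kset (θ : ℝ) : Set ℂ := {z : ℂ | |Complex.arg z| ≤ θ}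

/-- The class GBV: `c_n ∈ K(θ₁)` for some `θ₁ ∈ [0, π/2)` and all `n ≥ 1`, and
`Σ_{n=m}^{2m} |Δc_n| ≤ M · max_{m ≤ n < m+N₀} |c_n|` for all `m ≥ 1`. -/
def GBV (c : ℕ → ℂ) : Prop :=
  (∃ θ₁ : ℝ, 0 ≤ θ₁ ∧ θ₁ < Real.pi / 2 ∧ ∀ n, 1 ≤ n → c n ∈ Kset θ₁) ∧
  (∃ N₀ : ℕ, 1 ≤ N₀ ∧ ∃ M : ℝ, 0 < M ∧ ∀ m, 1 ≤ m →
    (∑ n ∈ Finset.Icc m (2 * m), ‖c n - c (n + 1)‖) ≤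
      M * ⨆ n ∈ Finset.Ico m (m + N₀), ‖c n‖)

/-!
For `n ≥ 1` the terms `±n` pair up as
`f̂(n) e^{inx} + f̂(-n) e^{-inx} = (f̂(n) + f̂(-n)) e^{-inx} + 2i f̂(n) sin nx`,
so the symmetric partial sums split into an absolutely convergent series and a sine series.
For the sine series, the GBV condition together with `n f̂(n) → 0` makes `p · Σ_{n ≥ p} |Δf̂(n)|`
small (sum the blocks `[m, 2m]` dyadically). Split the sum at `P ≈ 1 / |sin (x/2)|`: below `P`
each term is at most `2 n |f̂(n)| |sin (x/2)|`, and above `P` Abel summation against the Dirichlet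
bound `|Σ_{k<n} sin kx| ≤ 1 / |sin (x/2)|` applies. Both bounds are uniform in `x`, so the
symmetric partial sums converge uniformly and the limit is continuous.
-/

open Finset

theorem Complex.im_exp_ofReal_mul_I_pow (x : ℝ) (k : ℕ) :
    (exp (x * I) ^ k).im = Real.sin (k * x) := by
  rw [← Complex.exp_nat_mul, ← mul_assoc, ← ofReal_natCast, ← ofReal_mul, exp_ofReal_mul_I_im]

theorem Complex.norm_exp_ofReal_mul_I_sub_one (x : ℝ) :
    ‖exp (x * I) - 1‖ = 2 * |Real.sin (x / 2)| := by
  rw [mul_comm, norm_exp_I_mul_ofReal_sub_one, norm_mul, Real.norm_eq_abs, Real.norm_eq_abs,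
    abs_two]

theorem Real.abs_sin_nat_mul_le (n : ℕ) (x : ℝ) :
    |Real.sin (n * x)| ≤ 2 * n * |Real.sin (x / 2)| := by
  set w := Complex.exp (x * Complex.I)
  have hw : ∀ k : ℕ, ‖w ^ k‖ = 1 := fun k => by
    rw [norm_pow, Complex.norm_exp_ofReal_mul_I, one_pow]
  calc |Real.sin (n * x)| = |(w ^ n - 1).im| := by
        rw [Complex.sub_im, Complex.im_exp_ofReal_mul_I_pow, Complex.one_im, sub_zero]
    _ ≤ ‖(∑ k ∈ range n, w ^ k) * (w - 1)‖ := by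
        rw [geom_sum_mul]; exact Complex.abs_im_le_norm _
    _ ≤ n * (2 * |Real.sin (x / 2)|) := by
        rw [norm_mul, Complex.norm_exp_ofReal_mul_I_sub_one]
        gcongr
        exact (norm_sum_le _ _).trans (by simp [hw])
    _ = 2 * n * |Real.sin (x / 2)| := by ring

theorem Real.abs_sum_range_sin_mul_mul_abs_sin_half_le_one (n : ℕ) (x : ℝ) :
    |∑ k ∈ range n, Real.sin (k * x)| * |Real.sin (x / 2)| ≤ 1 := by
  set w := Complex.exp (x * Complex.I)
  have hsum : ∑ k ∈ range n, Real.sin (k * x) = (∑ k ∈ range n, w ^ k).im := by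
    simp only [Complex.im_sum, Complex.im_exp_ofReal_mul_I_pow, w]
  have h2 : ‖w ^ n - 1‖ ≤ 2 := by
    calc ‖w ^ n - 1‖ ≤ ‖w ^ n‖ + ‖(1 : ℂ)‖ := norm_sub_le _ _
      _ = 2 := by rw [norm_pow, Complex.norm_exp_ofReal_mul_I]; norm_num
  have him := Complex.abs_im_le_norm (∑ k ∈ range n, w ^ k)
  rw [← geom_sum_mul, norm_mul, Complex.norm_exp_ofReal_mul_I_sub_one] at h2
  rw [hsum]
  nlinarith [abs_nonneg (Real.sin (x / 2))]

theorem Complex.mul_exp_add_mul_exp_neg (a b z : ℂ) :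
    a * exp (z * I) + b * exp (-z * I) = (a + b) * exp (-z * I) + 2 * I * a * sin z := by
  rw [Complex.sin]
  ring_nf
  rw [I_sq]
  ring

theorem Finset.sum_Icc_neg_sub_sum_Icc_neg {M : Type*} [AddCommGroup M] (g : ℤ → M) {p q : ℕ}
    (hpq : p ≤ q) :
    ∑ k ∈ Icc (-(q : ℤ)) q, g k - ∑ k ∈ Icc (-(p : ℤ)) p, g k =
      ∑ n ∈ Ico p q, (g (n + 1) + g (-n - 1)) := by
  induction q, hpq using Nat.le_induction with
  | base => simp
  | succ q hpq ih =>
    rw [Nat.cast_succ, sum_Icc_succ_eq_add_endpoints, sum_Ico_succ_top hpq, ← ih, neg_add']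
    abel

theorem Finset.norm_sum_Ico_smul_le {R M : Type*} [NormedRing R] [NormedAddCommGroup M]
    [Module R M] [IsBoundedSMul R M] (f : ℕ → R) (g : ℕ → M) {B : ℝ}
    (hB : ∀ k, ‖∑ i ∈ range k, g i‖ ≤ B) {m n : ℕ} (hmn : m < n) :
    ‖∑ i ∈ Ico m n, f i • g i‖ ≤
      (‖f (n - 1)‖ + ‖f m‖ + ∑ i ∈ Ico m (n - 1), ‖f i - f (i + 1)‖) * B := by
  have hB0 : 0 ≤ B := (norm_nonneg _).trans (hB 0)
  have hsmul : ∀ (c : R) k, ‖c • ∑ i ∈ range k, g i‖ ≤ ‖c‖ * B := fun c k =>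
    (norm_smul_le _ _).trans (by gcongr; exact hB k)
  rw [sum_Ico_by_parts f g hmn, add_mul, add_mul, sum_mul]
  refine (norm_sub_le _ _).trans (add_le_add ((norm_sub_le _ _).trans
    (add_le_add (hsmul _ _) (hsmul _ _))) ((norm_sum_le _ _).trans (sum_le_sum fun i _ => ?_)))
  rw [← norm_neg (f i - f (i + 1)), neg_sub]
  exact hsmul _ _

theorem mul_sum_Ico_le_of_mul_sum_Icc_two_mul_le {d : ℕ → ℝ} (hd : ∀ n, 0 ≤ d n) {m : ℕ} {C : ℝ}
    (h : ∀ k ≥ m, k * ∑ n ∈ Icc k (2 * k), d n ≤ C) (p : ℕ) (hp : m ≤ p) (q : ℕ) :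
    p * ∑ n ∈ Ico p q, d n ≤ 2 * C := by
  induction hl : q - p using Nat.strong_induction_on generalizing p with
  | _ l ih =>
  have hblock := h p hp
  have hC : 0 ≤ C := le_trans (mul_nonneg p.cast_nonneg (sum_nonneg fun n _ => hd n)) hblock
  rcases le_or_gt q (2 * p + 1) with hq | hq
  · calc p * ∑ n ∈ Ico p q, d n ≤ p * ∑ n ∈ Icc p (2 * p), d n := by
          gcongr
          · exact fun n _ _ => hd n
          · exact (Ico_subset_Ico_right hq).trans_eq (Ico_add_one_right_eq_Icc _ _)
      _ ≤ 2 * C := by linarith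
  · have htail := ih (q - (2 * p + 1)) (by omega) (2 * p + 1) (by omega) rfl
    have htail0 : 0 ≤ ∑ n ∈ Ico (2 * p + 1) q, d n := sum_nonneg fun n _ => hd n
    rw [← sum_Ico_consecutive _ (by omega : p ≤ 2 * p + 1) hq.le, Ico_add_one_right_eq_Icc]
    push_cast at htail
    nlinarith

section SineSeries

variable {a : ℕ → ℂ} {m : ℕ} {ε η : ℝ}

theorem norm_sum_Ico_mul_sin_le_of_mul_norm_le (ha : ∀ n ≥ m, n * ‖a n‖ ≤ ε) {p : ℕ}
    (hp : m ≤ p) (q : ℕ) (x : ℝ) :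
    ‖∑ n ∈ Ico p q, a n * Real.sin (n * x)‖ ≤ 2 * ε * |Real.sin (x / 2)| * (q - p : ℕ) := by
  refine (norm_sum_le _ _).trans ?_
  rw [mul_comm _ ((q - p : ℕ) : ℝ), ← Nat.card_Ico, ← nsmul_eq_mul]
  refine sum_le_card_nsmul _ _ _ fun n hn => ?_
  have hn : m ≤ n := hp.trans (mem_Ico.1 hn).1
  rw [norm_mul, Complex.norm_real, Real.norm_eq_abs]
  calc ‖a n‖ * |Real.sin (n * x)| ≤ ‖a n‖ * (2 * n * |Real.sin (x / 2)|) := by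
        gcongr; exact Real.abs_sin_nat_mul_le n x
    _ = 2 * (n * ‖a n‖) * |Real.sin (x / 2)| := by ring
    _ ≤ 2 * ε * |Real.sin (x / 2)| := by gcongr; exact ha n hn

theorem mul_abs_sin_half_mul_norm_sum_Ico_mul_sin_le (ha : ∀ n ≥ m, n * ‖a n‖ ≤ ε)
    (hΔ : ∀ p ≥ m, ∀ q, p * ∑ n ∈ Ico p q, ‖a n - a (n + 1)‖ ≤ η) {r : ℕ} (hr : m ≤ r)
    (q : ℕ) (x : ℝ) :
    r * |Real.sin (x / 2)| * ‖∑ n ∈ Ico r q, a n * Real.sin (n * x)‖ ≤ 2 * ε + η := by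
  have hε : 0 ≤ ε := le_trans (by positivity) (ha m le_rfl)
  have hη : 0 ≤ η := by simpa using hΔ m le_rfl m
  set δ := |Real.sin (x / 2)|
  rcases le_or_gt q r with hqr | hrq
  · simp only [Ico_eq_empty_of_le hqr, sum_empty, norm_zero, mul_zero]
    positivity
  rcases (show 0 ≤ δ from abs_nonneg _).eq_or_lt with hδ | hδ
  · rw [← hδ, mul_zero, zero_mul]
    positivity
  have hdirichlet : ∀ k, ‖∑ i ∈ range k, (Real.sin (i * x) : ℂ)‖ ≤ 1 / δ := fun k => by
    rw [← Complex.ofReal_sum, Complex.norm_real, Real.norm_eq_abs, le_div_iff₀ hδ]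
    exact Real.abs_sum_range_sin_mul_mul_abs_sin_half_le_one k x
  have habel := norm_sum_Ico_smul_le a _ hdirichlet hrq
  simp only [smul_eq_mul] at habel
  have hlast : r * ‖a (q - 1)‖ ≤ ε := le_trans (by gcongr; exact_mod_cast Nat.le_sub_one_of_lt hrq)
    (ha (q - 1) (by omega))
  calc r * δ * ‖∑ n ∈ Ico r q, a n * Real.sin (n * x)‖
      ≤ r * δ * ((‖a (q - 1)‖ + ‖a r‖ + ∑ i ∈ Ico r (q - 1), ‖a i - a (i + 1)‖) * (1 / δ)) := by
        gcongr
    _ = r * ‖a (q - 1)‖ + r * ‖a r‖ + r * ∑ i ∈ Ico r (q - 1), ‖a i - a (i + 1)‖ := by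
        field_simp
    _ ≤ ε + ε + η := by gcongr; exacts [ha r hr, hΔ r hr _]
    _ = 2 * ε + η := by ring

theorem norm_sum_Ico_mul_sin_le (ha : ∀ n ≥ m, n * ‖a n‖ ≤ ε)
    (hΔ : ∀ p ≥ m, ∀ q, p * ∑ n ∈ Ico p q, ‖a n - a (n + 1)‖ ≤ η) {p : ℕ} (hp : m ≤ p)
    (q : ℕ) (x : ℝ) :
    ‖∑ n ∈ Ico p q, a n * Real.sin (n * x)‖ ≤ 6 * ε + η := by
  have hε : 0 ≤ ε := le_trans (by positivity) (ha m le_rfl)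
  have hη : 0 ≤ η := by simpa using hΔ m le_rfl m
  rcases (abs_nonneg (Real.sin (x / 2))).eq_or_lt with hδ | hδ
  · refine (norm_sum_Ico_mul_sin_le_of_mul_norm_le ha hp q x).trans ?_
    rw [← hδ, mul_zero, zero_mul]
    positivity
  set δ := |Real.sin (x / 2)|
  set P := ⌈δ⁻¹⌉₊
  have hP₁ : 1 ≤ P * δ := by
    rw [← inv_mul_cancel₀ hδ.ne']; gcongr; exact Nat.le_ceil _
  have hP₂ : P * δ ≤ 2 := by
    have h1 : δ ≤ 1 := abs_sin_le_one _
    have h2 := Nat.ceil_lt_add_one (inv_nonneg.2 hδ.le)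
    calc P * δ ≤ (δ⁻¹ + 1) * δ := by gcongr
      _ = 1 + δ := by field_simp
      _ ≤ 2 := by linarith
  have hlow : ∀ k, k - p ≤ P → ‖∑ n ∈ Ico p k, a n * Real.sin (n * x)‖ ≤ 4 * ε := fun k hk => by
    refine (norm_sum_Ico_mul_sin_le_of_mul_norm_le ha hp k x).trans ?_
    calc 2 * ε * δ * (k - p : ℕ) ≤ 2 * ε * (P * δ) := by
          rw [mul_assoc, mul_comm δ]; gcongr
      _ ≤ 4 * ε := by nlinarith
  have hhigh : ∀ r, m ≤ r → P ≤ r →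
      ‖∑ n ∈ Ico r q, a n * Real.sin (n * x)‖ ≤ 2 * ε + η := fun r hr hPr => by
    have hrδ : 1 ≤ r * δ := hP₁.trans (by gcongr)
    exact le_trans (le_mul_of_one_le_left (norm_nonneg _) hrδ)
      (mul_abs_sin_half_mul_norm_sum_Ico_mul_sin_le ha hΔ hr q x)
  rcases le_total q P with hqP | hPq
  · linarith [hlow q (by omega)]
  rcases le_total P p with hPp | hpP
  · linarith [hhigh p hp hPp]
  rw [← sum_Ico_consecutive _ hpP hPq]
  refine (norm_add_le _ _).trans ?_
  linarith [hlow P (by omega), hhigh P (hp.trans hpP) le_rfl]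

end SineSeries

theorem mul_sum_Icc_norm_sub_le_of_gbv {a : ℕ → ℂ} {N₀ : ℕ} {M : ℝ} (hM : 0 ≤ M)
    (hblock : ∀ m, 1 ≤ m →
      ∑ n ∈ Icc m (2 * m), ‖a n - a (n + 1)‖ ≤ M * ⨆ n ∈ Ico m (m + N₀), ‖a n‖)
    {m : ℕ} {ε : ℝ} (ha : ∀ n ≥ m, n * ‖a n‖ ≤ ε) {k : ℕ} (hk : m ≤ k) (hk₁ : 1 ≤ k) :
    k * ∑ n ∈ Icc k (2 * k), ‖a n - a (n + 1)‖ ≤ M * ε := by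
  have hε : 0 ≤ ε := le_trans (by positivity) (ha m le_rfl)
  have hk₀ : (0 : ℝ) < k := by exact_mod_cast hk₁
  have hsup : ⨆ n ∈ Ico k (k + N₀), ‖a n‖ ≤ ε / k := by
    refine Real.iSup_le (fun n => Real.iSup_le (fun hn => ?_) (by positivity)) (by positivity)
    have hkn : k ≤ n := (mem_Ico.1 hn).1
    rw [le_div_iff₀ hk₀, mul_comm]
    exact le_trans (by gcongr) (ha n (hk.trans hkn))
  calc k * ∑ n ∈ Icc k (2 * k), ‖a n - a (n + 1)‖ ≤ k * (M * (ε / k)) := by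
        gcongr; exact (hblock k hk₁).trans (by gcongr)
    _ = M * ε := by field_simp

theorem exists_forall_norm_sum_Ico_mul_sin_le {a : ℕ → ℂ} {N₀ : ℕ} {M : ℝ} (hM : 0 ≤ M)
    (hblock : ∀ m, 1 ≤ m →
      ∑ n ∈ Icc m (2 * m), ‖a n - a (n + 1)‖ ≤ M * ⨆ n ∈ Ico m (m + N₀), ‖a n‖)
    (hlim : Tendsto (fun n : ℕ => (n : ℂ) * a n) atTop (nhds 0)) {ε : ℝ} (hε : 0 < ε) :
    ∃ m, ∀ p ≥ m, ∀ q (x : ℝ), ‖∑ n ∈ Ico p q, a n * Real.sin (n * x)‖ ≤ ε := by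
  set ε₁ := ε / (6 + 2 * M)
  have hε₁ : 0 < ε₁ := by positivity
  have hlim' : Tendsto (fun n : ℕ => n * ‖a n‖) atTop (nhds 0) := by
    simpa using hlim.norm
  obtain ⟨m, hm⟩ := ((hlim'.eventually (Iic_mem_nhds hε₁)).and
    (eventually_ge_atTop 1)).exists_forall_of_atTop
  have ha : ∀ n ≥ m, n * ‖a n‖ ≤ ε₁ := fun n hn => (hm n hn).1
  have hΔ : ∀ p ≥ m, ∀ q, p * ∑ n ∈ Ico p q, ‖a n - a (n + 1)‖ ≤ 2 * (M * ε₁) :=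
    mul_sum_Ico_le_of_mul_sum_Icc_two_mul_le (fun n => norm_nonneg _) fun k hk =>
      mul_sum_Icc_norm_sub_le_of_gbv hM hblock ha hk ((hm m le_rfl).2.trans hk)
  have hε₁_mul : ε₁ * (6 + 2 * M) = ε := div_mul_cancel₀ _ (by positivity)
  exact ⟨m, fun p hp q x => (norm_sum_Ico_mul_sin_le ha hΔ hp q x).trans (by linarith)⟩

theorem exists_tendstoUniformly_of_norm_sub_le {X E : Type*} [NormedAddCommGroup E]
    [CompleteSpace E] {F : ℕ → X → E}
    (hF : ∀ ε > 0, ∃ m, ∀ q ≥ m, ∀ x, ‖F q x - F m x‖ ≤ ε) :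
    ∃ G, TendstoUniformly F G atTop := by
  have hcauchy : UniformCauchySeqOn F atTop Set.univ := by
    rw [Metric.uniformCauchySeqOn_iff]
    intro ε hε
    obtain ⟨m, hm⟩ := hF (ε / 3) (by positivity)
    refine ⟨m, fun p hp q hq x _ => ?_⟩
    rw [dist_eq_norm, ← sub_sub_sub_cancel_right _ _ (F m x)]
    linarith [norm_sub_le (F p x - F m x) (F q x - F m x), hm p hp x, hm q hq x]
  choose G hG using fun x => cauchySeq_tendsto_of_complete (hcauchy.cauchySeq (Set.mem_univ x))
  exact ⟨G, tendstoUniformlyOn_univ.1 (hcauchy.tendstoUniformlyOn_of_tendsto fun x _ => hG x)⟩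

theorem norm_sum_Icc_neg_mul_exp_sub_le (c : ℤ → ℂ) (x : ℝ) {p q : ℕ} (hpq : p ≤ q) :
    ‖∑ k ∈ Icc (-(q : ℤ)) q, c k * exp (k * x * I) - ∑ k ∈ Icc (-(p : ℤ)) p, c k * exp (k * x * I)‖
      ≤ ∑ n ∈ Ico p q, ‖c (n + 1) + c (-n - 1)‖ +
        2 * ‖∑ n ∈ Ico (p + 1) (q + 1), c n * Real.sin (n * x)‖ := by
  have hterm : ∀ n : ℕ, c (n + 1) * exp (((n + 1 : ℤ) : ℂ) * x * I) +
      c (-n - 1) * exp (((-n - 1 : ℤ) : ℂ) * x * I) =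
      (c (n + 1) + c (-n - 1)) * exp (-(((n + 1 : ℕ) * x : ℝ) : ℂ) * I) +
        2 * I * (c (n + 1 : ℕ) * Real.sin ((n + 1 : ℕ) * x)) := fun n => by
    rw [show ((n + 1 : ℤ) : ℂ) * x * I = (((n + 1 : ℕ) * x : ℝ) : ℂ) * I by push_cast; ring,
      show ((-n - 1 : ℤ) : ℂ) * x * I = -(((n + 1 : ℕ) * x : ℝ) : ℂ) * I by push_cast; ring,
      Complex.mul_exp_add_mul_exp_neg, Complex.ofReal_sin]
    push_cast
    ring
  rw [sum_Icc_neg_sub_sum_Icc_neg _ hpq]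
  simp only [hterm, sum_add_distrib, ← mul_sum]
  rw [← sum_Ico_add' (fun n : ℕ => c n * (Real.sin (n * x) : ℂ))]
  refine (norm_add_le _ _).trans (add_le_add ((norm_sum_le _ _).trans_eq ?_) ?_)
  · simp only [norm_mul, ← Complex.ofReal_neg, Complex.norm_exp_ofReal_mul_I, mul_one]
  · rw [norm_mul, norm_mul, Complex.norm_I, Complex.norm_two, mul_one]

theorem stmt_12_general (fhat : ℤ → ℂ)
    (h1 : GBV (fun n : ℕ => fhat (n : ℤ)))
    (hsum : Summable (fun n : ℕ => ‖fhat ((n : ℤ) + 1) + fhat (-(n : ℤ) - 1)‖))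
    (hlim : Filter.Tendsto (fun n : ℕ => (n : ℂ) * fhat (n : ℤ)) Filter.atTop (nhds 0)) :
    ∃ f : ℝ → ℂ, Continuous f ∧ ∀ x : ℝ, Filter.Tendsto
      (fun N : ℕ => ∑ k ∈ Finset.Icc (-(N : ℤ)) (N : ℤ),
        fhat k * Complex.exp ((k : ℂ) * (x : ℂ) * Complex.I))
      Filter.atTop (nhds (f x)) := by
  obtain ⟨-, N₀, -, M, hM, hblock⟩ := h1
  obtain ⟨f, hf⟩ := exists_tendstoUniformly_of_norm_sub_le
      (F := fun N (x : ℝ) => ∑ k ∈ Icc (-(N : ℤ)) N, fhat k * exp (k * x * I)) fun ε hε => by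
    obtain ⟨m₁, hm₁⟩ :=
      Metric.cauchySeq_iff.1 hsum.hasSum.tendsto_sum_nat.cauchySeq (ε / 2) (by positivity)
    obtain ⟨m₂, hm₂⟩ := exists_forall_norm_sum_Ico_mul_sin_le hM.le hblock hlim
      (ε := ε / 4) (by positivity)
    refine ⟨max m₁ m₂, fun q hq x => (norm_sum_Icc_neg_mul_exp_sub_le fhat x hq).trans ?_⟩
    have htail := hm₁ q (le_of_max_le_left hq) (max m₁ m₂) (le_max_left _ _)
    rw [Real.dist_eq, ← sum_Ico_eq_sub _ hq, abs_of_nonneg (sum_nonneg fun n _ => norm_nonneg _)]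
      at htail
    linarith [hm₂ (max m₁ m₂ + 1) (by omega) (q + 1) x]
  exact ⟨f, hf.continuous (Eventually.of_forall fun N => by fun_prop).frequently, hf.tendsto_at⟩

/-- Theorem 1, sufficiency: under the GBV hypotheses, if `Σ_{n≥1} |f̂(n)+f̂(−n)| < ∞`
and `lim n·f̂(n) = 0`, then the symmetric partial sums converge at every real `x`
and the sum function is continuous. -/
theorem stmt_12 (fhat : ℤ → ℂ)
    (h1 : GBV (fun n : ℕ => fhat (n : ℤ)))
    (h2 : GBV (fun n : ℕ => fhat (n : ℤ) + fhat (-(n : ℤ))))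
    (hsum : Summable (fun n : ℕ => ‖fhat ((n : ℤ) + 1) + fhat (-(n : ℤ) - 1)‖))
    (hlim : Filter.Tendsto (fun n : ℕ => (n : ℂ) * fhat (n : ℤ)) Filter.atTop (nhds 0)) :
    ∃ f : ℝ → ℂ, Continuous f ∧ ∀ x : ℝ, Filter.Tendsto
      (fun N : ℕ => ∑ k ∈ Finset.Icc (-(N : ℤ)) (N : ℤ),
        fhat k * Complex.exp ((k : ℂ) * (x : ℂ) * Complex.I))
      Filter.atTop (nhds (f x)) :=
  stmt_12_general fhat h1 hsum hlim
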